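/- Let H = ℕ = {1, 2, 3, …} with H_L = {1, …, L}, let D_{ij} = −2δ_{ij} + δ_{i,j−1} + δ_{i,j+1} (so that (D^{-1})_{ij} = −min(i,j)), and let G = O be the zero matrix. Then the unique canonical solution of the infinite Q-system ∏_{j∈H} Q_j(w)^{D_{ij}} + w_i = 1, i.e. Q_{i−1}(w)Q_{i+1}(w)/(Q_i(w))^2 + w_i = 1 with Q_0(w) = 1, is given by Q_i(w) = ∏_{j=1}^∞ (1 − w_j)^{−min(i,j)}. -/

import Mathlib

noncomputable def binomC (a : ℂ) (b : ℕ) : ℂ :=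
  (∏ j ∈ Finset.range b, (a - (j : ℂ))) / (Nat.factorial b : ℂ)

noncomputable def cpow {σ : Type*} (f : MvPowerSeries σ ℂ) (α : ℂ) : MvPowerSeries σ ℂ :=
  fun N => ∑ k ∈ Finset.range (N.sum (fun _ e => e) + 1),
    binomC α k * MvPowerSeries.coeff (R := ℂ) N ((f - 1) ^ k)

/-- `HasProdPS f P`: the (possibly infinite) product of the family `f` converges to `P`
in the projective-limit topology on formal power series, i.e. every coefficient of the
finite partial products eventually stabilizes at the corresponding coefficient of `P`,
irrespective of the order of the product. -/
def HasProdPS {ι σ : Type*} (f : ι → MvPowerSeries σ ℂ) (P : MvPowerSeries σ ℂ) : Prop :=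
  ∀ N : σ →₀ ℕ, ∃ s : Finset ι, ∀ t : Finset ι, s ⊆ t →
    MvPowerSeries.coeff (R := ℂ) N (∏ j ∈ t, f j) = MvPowerSeries.coeff (R := ℂ) N P

/-- A family `(Q_i)` with unit constant terms is a solution of the standard infinite
`Q`-system `Q_i + w_i ∏_j Q_j^{G_{ij}} = 1` (the infinite products being required to
converge). -/
def InfStdSys {H : Type*} (G : H → H → ℂ) (Q : H → MvPowerSeries H ℂ) : Prop :=
  (∀ i, MvPowerSeries.constantCoeff (R := ℂ) (Q i) = 1) ∧
  ∀ i, ∃ P, HasProdPS (fun j => cpow (Q j) (G i j)) P ∧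
    Q i + MvPowerSeries.X i * P = 1

/-- A family `(Q_i)` with unit constant terms is a solution of the infinite `Q`-system
`∏_j Q_j^{D_{ij}} + w_i ∏_j Q_j^{G_{ij}} = 1` (the infinite products being required to
converge). -/
def InfSys {H : Type*} (D G : H → H → ℂ) (Q : H → MvPowerSeries H ℂ) : Prop :=
  (∀ i, MvPowerSeries.constantCoeff (R := ℂ) (Q i) = 1) ∧
  ∀ i, ∃ P₁ P₂, HasProdPS (fun j => cpow (Q j) (D i j)) P₁ ∧
    HasProdPS (fun j => cpow (Q j) (G i j)) P₂ ∧
    P₁ + MvPowerSeries.X i * P₂ = 1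

/-- The inversion property of a solution: for each `i`, the iterated infinite product
`∏_j (∏_k Q_k^{(D⁻¹)_{ij} D_{jk}})` exists and equals `Q_i`. -/
def IsCanonicalPS {ι σ : Type*} (Dinv D : ι → ι → ℂ) (Q : ι → MvPowerSeries σ ℂ) : Prop :=
  ∀ i, ∃ inner : ι → MvPowerSeries σ ℂ,
    (∀ j, HasProdPS (fun k => cpow (Q k) (Dinv i j * D j k)) (inner j)) ∧
    HasProdPS inner (Q i)

/-- Condition (D): `Dinv` is a two-sided inverse of the infinite matrix `D`, all the sums
involved having finitely many nonzero terms. -/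
def InvPair {H : Type*} [DecidableEq H] (D Dinv : H → H → ℂ) : Prop :=
  (∀ i k, ({j | D i j * Dinv j k ≠ 0} : Set H).Finite ∧
    ∑ᶠ j, D i j * Dinv j k = if i = k then (1 : ℂ) else 0) ∧
  (∀ i k, ({j | Dinv i j * D j k ≠ 0} : Set H).Finite ∧
    ∑ᶠ j, Dinv i j * D j k = if i = k then (1 : ℂ) else 0)

/-- Condition (G'): the matrix product `G' = G · Dinv` is well-defined, i.e. for each
`i, k` all but finitely many `G_{ij} (D⁻¹)_{jk}` vanish, and its value is `G'`. -/
def MulDef {H : Type*} (G Dinv G' : H → H → ℂ) : Prop :=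
  ∀ i k, ({j | G i j * Dinv j k ≠ 0} : Set H).Finite ∧
    ∑ᶠ j, G i j * Dinv j k = G' i k

/-- The projection `p_L : ℂ[[w]] → ℂ[[w_L]]` (realized as a self-map of `ℂ[[w]]`),
sending `w_i ↦ w_i` for `i ∈ s` and `w_i ↦ 0` otherwise. -/
noncomputable def projL {H : Type*} [DecidableEq H] (s : Finset H)
    (f : MvPowerSeries H ℂ) : MvPowerSeries H ℂ :=
  fun N => if N.support ⊆ s then MvPowerSeries.coeff (R := ℂ) N f else 0

/-- The matrix `D_{ij} = -2δ_{ij} + δ_{i,j-1} + δ_{i,j+1}` on `H = {1,2,3,…}`. -/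
noncomputable def Dtri : ℕ+ → ℕ+ → ℂ := fun i j =>
  if i = j then -2 else if i = j + 1 ∨ j = i + 1 then 1 else 0

/-- Its inverse `(D⁻¹)_{ij} = -min(i,j)`. -/
noncomputable def DtriInv : ℕ+ → ℕ+ → ℂ := fun i j => -(((min i j : ℕ+) : ℕ) : ℂ)

/-!
Coefficientwise, `cpow f a` is a polynomial in `a`, so the rules for complex powers of power
series with constant term `1` follow from their cases with natural exponents. A product
`∏_j (1 - w_j)^{a_j}` converges because each coefficient only sees finitely many factors, and
convergent infinite products can be multiplied and raised to powers factorwise.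

For a row-finite `D` with `D D⁻¹ = 1`, put `Q_i = ∏_j (1 - w_j)^{(D⁻¹)_{ij}}`. Then
`∏_k Q_k^{D_{jk}} = ∏_l (1 - w_l)^{(D D⁻¹)_{jl}} = 1 - w_j`, which is the `Q`-system with `G = 0`.
Conversely, for any solution of that system the inner products in the canonical property are
`(1 - w_j)^{(D⁻¹)_{ij}}`, so a canonical solution is this product. For the tridiagonal `D` it remains
to check `D D⁻¹ = 1`, i.e. that the second difference of `k ↦ min k l` is `-δ_{kl}`.
-/

open MvPowerSeries Finset

section PolynomialFamilies

noncomputable def polynomialMaps : Subring (ℂ → ℂ) :=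
  (RingHom.pi fun a : ℂ => Polynomial.evalRingHom a).range

lemma mem_polynomialMaps {φ : ℂ → ℂ} :
    φ ∈ polynomialMaps ↔ ∃ p : Polynomial ℂ, ∀ a, p.eval a = φ a := by
  simp [polynomialMaps, funext_iff]

lemma id_mem_polynomialMaps : (fun a : ℂ => a) ∈ polynomialMaps :=
  mem_polynomialMaps.2 ⟨Polynomial.X, fun _ => Polynomial.eval_X⟩

lemma const_mem_polynomialMaps (c : ℂ) : (fun _ : ℂ => c) ∈ polynomialMaps :=
  mem_polynomialMaps.2 ⟨Polynomial.C c, fun _ => Polynomial.eval_C⟩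

lemma comp_mem_polynomialMaps {φ g : ℂ → ℂ} (hφ : φ ∈ polynomialMaps)
    (hg : g ∈ polynomialMaps) : φ ∘ g ∈ polynomialMaps := by
  obtain ⟨p, hp⟩ := mem_polynomialMaps.1 hφ
  obtain ⟨q, hq⟩ := mem_polynomialMaps.1 hg
  exact mem_polynomialMaps.2 ⟨p.comp q, fun a => by simp [hp, hq]⟩

lemma eq_of_mem_polynomialMaps {φ ψ : ℂ → ℂ} (hφ : φ ∈ polynomialMaps)
    (hψ : ψ ∈ polynomialMaps) (h : ∀ n : ℕ, φ n = ψ n) : φ = ψ := by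
  obtain ⟨p, hp⟩ := mem_polynomialMaps.1 (sub_mem hφ hψ)
  have hp0 : p = 0 := p.eq_zero_of_infinite_isRoot <|
    Set.infinite_of_injective_forall_mem Nat.cast_injective fun n => by simp [hp, h]
  funext a
  simpa [hp0, sub_eq_zero] using (hp a).symm

lemma binomC_eq_eval_descPochhammer (a : ℂ) (k : ℕ) :
    binomC a k = (descPochhammer ℂ k).eval a / k.factorial := by
  rw [binomC, descPochhammer_eval_eq_prod_range]

lemma binomC_natCast (n k : ℕ) : binomC n k = n.choose k := by
  rw [binomC_eq_eval_descPochhammer, descPochhammer_eval_eq_descFactorial,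
    Nat.descFactorial_eq_factorial_mul_choose, Nat.cast_mul,
    mul_div_cancel_left₀ _ (Nat.cast_ne_zero.2 k.factorial_ne_zero)]

lemma binomC_mem_polynomialMaps (k : ℕ) : (fun a => binomC a k) ∈ polynomialMaps :=
  mem_polynomialMaps.2 ⟨Polynomial.C ((k.factorial : ℂ)⁻¹) * descPochhammer ℂ k,
    fun a => by rw [binomC_eq_eval_descPochhammer]; simp [div_eq_inv_mul]⟩

variable {σ : Type*}

def IsPolynomialFamily (F : ℂ → MvPowerSeries σ ℂ) : Prop :=
  ∀ N, (fun a => coeff N (F a)) ∈ polynomialMaps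

lemma isPolynomialFamily_const (f : MvPowerSeries σ ℂ) : IsPolynomialFamily fun _ => f :=
  fun _ => const_mem_polynomialMaps _

lemma isPolynomialFamily_cpow (f : MvPowerSeries σ ℂ) : IsPolynomialFamily (cpow f) := by
  intro N
  have : (fun a => coeff N (cpow f a)) = ∑ k ∈ range (N.degree + 1),
      (fun a => binomC a k) * fun _ => coeff N ((f - 1) ^ k) := by
    funext a
    simp only [Finset.sum_apply, Pi.mul_apply]
    rfl
  rw [this]
  exact sum_mem fun k _ => mul_mem (binomC_mem_polynomialMaps k) (const_mem_polynomialMaps _)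

namespace IsPolynomialFamily

variable {F G : ℂ → MvPowerSeries σ ℂ}

lemma mul (hF : IsPolynomialFamily F) (hG : IsPolynomialFamily G) :
    IsPolynomialFamily fun a => F a * G a := by
  classical
  intro N
  have : (fun a => coeff N (F a * G a)) = ∑ x ∈ antidiagonal N,
      (fun a => coeff x.1 (F a)) * fun a => coeff x.2 (G a) := by
    funext a
    simp only [coeff_mul, Finset.sum_apply, Pi.mul_apply]
  rw [this]
  exact sum_mem fun x _ => mul_mem (hF x.1) (hG x.2)

lemma comp (hF : IsPolynomialFamily F) {g : ℂ → ℂ} (hg : g ∈ polynomialMaps) :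
    IsPolynomialFamily fun a => F (g a) :=
  fun N => comp_mem_polynomialMaps (hF N) hg

lemma eq_of_natCast (hF : IsPolynomialFamily F) (hG : IsPolynomialFamily G)
    (h : ∀ n : ℕ, F n = G n) (a : ℂ) : F a = G a := by
  ext N
  exact congrFun (eq_of_mem_polynomialMaps (hF N) (hG N) fun n => by rw [h n]) a

end IsPolynomialFamily

end PolynomialFamilies

section Cpow

variable {σ : Type*}

lemma coeff_cpow (f : MvPowerSeries σ ℂ) (a : ℂ) (N : σ →₀ ℕ) :
    coeff N (cpow f a) = ∑ k ∈ range (N.degree + 1), binomC a k * coeff N ((f - 1) ^ k) :=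
  rfl

lemma constantCoeff_cpow (f : MvPowerSeries σ ℂ) (a : ℂ) : constantCoeff (cpow f a) = 1 := by
  rw [← coeff_zero_eq_constantCoeff_apply, coeff_cpow]
  simp [binomC]

lemma cpow_zero (f : MvPowerSeries σ ℂ) : cpow f 0 = 1 := by
  classical
  ext N
  rw [coeff_cpow, sum_eq_single 0]
  · simp [binomC]
  · intro k _ hk
    simp [binomC, prod_eq_zero (mem_range.2 (Nat.pos_of_ne_zero hk))]
  · simp

lemma coeff_pow_eq_zero_of_degree_lt {g : MvPowerSeries σ ℂ} (hg : constantCoeff g = 0)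
    {k : ℕ} {N : σ →₀ ℕ} (h : N.degree < k) : coeff N (g ^ k) = 0 :=
  coeff_of_lt_order ((Nat.cast_lt.2 h).trans_le (le_order_pow_of_constantCoeff_eq_zero k hg))

variable {f g : MvPowerSeries σ ℂ}

lemma cpow_natCast (hf : constantCoeff f = 1) (n : ℕ) : cpow f n = f ^ n := by
  ext N
  set t : ℕ → ℂ := fun k => n.choose k * coeff N ((f - 1) ^ k)
  have ht : ∀ k, N.degree < k ∨ n < k → t k = 0 := by
    rintro k (hk | hk)
    · simp [t, coeff_pow_eq_zero_of_degree_lt (g := f - 1) (by simp [hf]) hk]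
    · simp [t, Nat.choose_eq_zero_of_lt hk]
  have hsum : ∀ m, min N.degree n ≤ m →
      ∑ k ∈ range (m + 1), t k = ∑ k ∈ range (min N.degree n + 1), t k := fun m hm =>
    (sum_subset (range_subset_range.2 (by omega)) fun k _ hk =>
      ht k (by simp only [mem_range] at hk; omega)).symm
  have hpow : f ^ n = ∑ k ∈ range (n + 1), (n.choose k : ℂ) • (f - 1) ^ k := by
    simpa [nsmul_eq_mul, Nat.cast_smul_eq_nsmul, mul_comm] using add_pow (f - 1) 1 n
  calc coeff N (cpow f n) = ∑ k ∈ range (N.degree + 1), t k := by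
        simp only [coeff_cpow, binomC_natCast, t]
    _ = ∑ k ∈ range (n + 1), t k := by rw [hsum _ (min_le_left _ _), hsum _ (min_le_right _ _)]
    _ = coeff N (f ^ n) := by simp [hpow, t, map_sum]

lemma cpow_one (hf : constantCoeff f = 1) : cpow f 1 = f := by
  simpa using cpow_natCast hf 1

lemma one_cpow (a : ℂ) : cpow (1 : MvPowerSeries σ ℂ) a = 1 :=
  (isPolynomialFamily_cpow 1).eq_of_natCast (isPolynomialFamily_const 1) (fun n => by
    rw [cpow_natCast (map_one _), one_pow]) a

lemma cpow_add (hf : constantCoeff f = 1) (a b : ℂ) : cpow f (a + b) = cpow f a * cpow f b := by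
  have hnat : ∀ n : ℕ, cpow f (a + n) = cpow f a * f ^ n := fun n =>
    ((isPolynomialFamily_cpow f).comp
      (add_mem id_mem_polynomialMaps (const_mem_polynomialMaps (n : ℂ)))).eq_of_natCast
      ((isPolynomialFamily_cpow f).mul (isPolynomialFamily_const _)) (fun m => by
        simp only [Pi.add_apply]
        rw [← Nat.cast_add, cpow_natCast hf, cpow_natCast hf, pow_add]) a
  exact ((isPolynomialFamily_cpow f).comp
    (add_mem (const_mem_polynomialMaps a) id_mem_polynomialMaps)).eq_of_natCast
    ((isPolynomialFamily_const _).mul (isPolynomialFamily_cpow f)) (fun n => by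
      simp only [Pi.add_apply]
      rw [hnat, cpow_natCast hf]) b

lemma cpow_mul_natCast (hf : constantCoeff f = 1) (a : ℂ) (n : ℕ) :
    cpow f (a * n) = cpow f a ^ n := by
  induction n with
  | zero => simp [cpow_zero]
  | succ n ih => rw [Nat.cast_succ, mul_add_one, cpow_add hf, ih, pow_succ]

lemma cpow_mul (hf : constantCoeff f = 1) (a b : ℂ) : cpow f (a * b) = cpow (cpow f a) b :=
  ((isPolynomialFamily_cpow f).comp
    (mul_mem (const_mem_polynomialMaps a) id_mem_polynomialMaps)).eq_of_natCast
    (isPolynomialFamily_cpow (cpow f a)) (fun n => by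
      simp only [Pi.mul_apply]
      rw [cpow_mul_natCast hf, cpow_natCast (constantCoeff_cpow f a)]) b

lemma mul_cpow (hf : constantCoeff f = 1) (hg : constantCoeff g = 1) (a : ℂ) :
    cpow (f * g) a = cpow f a * cpow g a :=
  (isPolynomialFamily_cpow (f * g)).eq_of_natCast
    ((isPolynomialFamily_cpow f).mul (isPolynomialFamily_cpow g)) (fun n => by
      rw [cpow_natCast (by simp [hf, hg]), cpow_natCast hf, cpow_natCast hg, mul_pow]) a

lemma cpow_sum {ι : Type*} (hf : constantCoeff f = 1) (t : Finset ι) (a : ι → ℂ) :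
    cpow f (∑ i ∈ t, a i) = ∏ i ∈ t, cpow f (a i) := by
  classical
  induction t using Finset.induction with
  | empty => simp [cpow_zero]
  | insert i t hi ih => rw [sum_insert hi, prod_insert hi, cpow_add hf, ih]

lemma finset_prod_cpow {ι : Type*} (t : Finset ι) {g : ι → MvPowerSeries σ ℂ}
    (hg : ∀ i ∈ t, constantCoeff (g i) = 1) (a : ℂ) :
    cpow (∏ i ∈ t, g i) a = ∏ i ∈ t, cpow (g i) a := by
  classical
  induction t using Finset.induction with
  | empty => simp [one_cpow]
  | insert i t hi ih =>
    rw [prod_insert hi, prod_insert hi, mul_cpow (hg i (mem_insert_self i t))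
      (by simp [map_prod, prod_eq_one fun j hj => hg j (mem_insert_of_mem hj)]),
      ih fun j hj => hg j (mem_insert_of_mem hj)]

end Cpow

section Truncation

variable {σ : Type*}

/-- Reduction modulo the power series whose coefficients vanish at every exponent `≤ N`. -/
noncomputable abbrev truncQuot (N : σ →₀ ℕ) :
    MvPowerSeries σ ℂ →+* MvPowerSeries σ ℂ ⧸ (LinearTopology.basis σ ℂ (⊥, N)).asIdeal :=
  Ideal.Quotient.mk _

lemma truncQuot_eq_iff {N : σ →₀ ℕ} {u v : MvPowerSeries σ ℂ} :
    truncQuot N u = truncQuot N v ↔ ∀ M ≤ N, coeff M u = coeff M v := by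
  simp [Ideal.Quotient.eq, TwoSidedIdeal.mem_asIdeal, LinearTopology.mem_basis_iff,
    TwoSidedIdeal.mem_bot, sub_eq_zero]

lemma coeff_eq_of_truncQuot_eq {N : σ →₀ ℕ} {u v : MvPowerSeries σ ℂ}
    (h : truncQuot N u = truncQuot N v) : coeff N u = coeff N v :=
  truncQuot_eq_iff.1 h N le_rfl

lemma coeff_cpow_congr {N : σ →₀ ℕ} {u v : MvPowerSeries σ ℂ}
    (h : truncQuot N u = truncQuot N v) (a : ℂ) : coeff N (cpow u a) = coeff N (cpow v a) := by
  simp only [coeff_cpow]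
  refine sum_congr rfl fun k _ => congrArg _ (coeff_eq_of_truncQuot_eq ?_)
  simp only [map_pow, map_sub, h]

end Truncation

section InfiniteProducts

variable {ι σ : Type*}

lemma hasProdPS_iff_eventually {f : ι → MvPowerSeries σ ℂ} {P : MvPowerSeries σ ℂ} :
    HasProdPS f P ↔ ∀ N, ∀ᶠ t in Filter.atTop, coeff N (∏ j ∈ t, f j) = coeff N P := by
  simp only [HasProdPS, Filter.eventually_atTop]

lemma hasProdPS_of_forall_notMem {f : ι → MvPowerSeries σ ℂ} {s : Finset ι}
    (hf : ∀ j ∉ s, f j = 1) : HasProdPS f (∏ j ∈ s, f j) :=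
  fun _ => ⟨s, fun _ hst => by rw [prod_subset hst fun j _ hj => hf j hj]⟩

lemma hasProdPS_one : HasProdPS (fun _ : ι => (1 : MvPowerSeries σ ℂ)) 1 := by
  simpa using hasProdPS_of_forall_notMem (f := fun _ : ι => (1 : MvPowerSeries σ ℂ)) (s := ∅)
    fun _ _ => rfl

lemma hasProdPS_mulSingle [DecidableEq ι] (i : ι) (c : MvPowerSeries σ ℂ) :
    HasProdPS (Pi.mulSingle i c) c := by
  simpa using hasProdPS_of_forall_notMem (f := Pi.mulSingle i c) (s := {i}) fun j hj =>
    Pi.mulSingle_eq_of_ne (M := fun _ : ι => MvPowerSeries σ ℂ) (by simpa using hj) c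

namespace HasProdPS

variable {f g : ι → MvPowerSeries σ ℂ} {P Q : MvPowerSeries σ ℂ}

lemma unique (hP : HasProdPS f P) (hQ : HasProdPS f Q) : P = Q := by
  ext N
  obtain ⟨t, hPt, hQt⟩ :=
    ((hasProdPS_iff_eventually.1 hP N).and (hasProdPS_iff_eventually.1 hQ N)).exists
  rw [← hPt, hQt]

lemma eventually_truncQuot (h : HasProdPS f P) (N : σ →₀ ℕ) :
    ∀ᶠ t in Filter.atTop, truncQuot N (∏ j ∈ t, f j) = truncQuot N P := by
  classical
  simp only [truncQuot_eq_iff, ← mem_Iic (a := N)]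
  exact (Iic N).eventually_all.2 fun M _ => hasProdPS_iff_eventually.1 h M

lemma mul (hf : HasProdPS f P) (hg : HasProdPS g Q) : HasProdPS (fun j => f j * g j) (P * Q) :=
  hasProdPS_iff_eventually.2 fun N =>
    ((hf.eventually_truncQuot N).and (hg.eventually_truncQuot N)).mono fun t ⟨hft, hgt⟩ =>
      coeff_eq_of_truncQuot_eq (by rw [prod_mul_distrib, map_mul, map_mul, hft, hgt])

lemma finset_prod {κ : Type*} (s : Finset κ) {F : κ → ι → MvPowerSeries σ ℂ}
    {P : κ → MvPowerSeries σ ℂ} (h : ∀ k ∈ s, HasProdPS (F k) (P k)) :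
    HasProdPS (fun j => ∏ k ∈ s, F k j) (∏ k ∈ s, P k) := by
  classical
  induction s using Finset.induction with
  | empty => simpa using hasProdPS_one
  | insert k s hk ih =>
    simpa only [prod_insert hk] using
      (h k (mem_insert_self k s)).mul (ih fun l hl => h l (mem_insert_of_mem hl))

lemma cpow (h : HasProdPS f P) (hf : ∀ j, constantCoeff (f j) = 1) (a : ℂ) :
    HasProdPS (fun j => cpow (f j) a) (cpow P a) :=
  hasProdPS_iff_eventually.2 fun N => (h.eventually_truncQuot N).mono fun t ht => by
    rw [← finset_prod_cpow t (fun j _ => hf j)]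
    exact coeff_cpow_congr ht a

lemma constantCoeff_eq_one (h : HasProdPS f P) (hf : ∀ j, constantCoeff (f j) = 1) :
    constantCoeff P = 1 := by
  obtain ⟨t, ht⟩ := (hasProdPS_iff_eventually.1 h 0).exists
  rw [← coeff_zero_eq_constantCoeff_apply, ← ht, coeff_zero_eq_constantCoeff_apply, map_prod,
    prod_eq_one fun j _ => hf j]

end HasProdPS

end InfiniteProducts

section Projection

variable {σ : Type*} [DecidableEq σ]

lemma coeff_projL (s : Finset σ) (f : MvPowerSeries σ ℂ) (N : σ →₀ ℕ) :
    coeff N (projL s f) = if N.support ⊆ s then coeff N f else 0 :=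
  rfl

noncomputable def projLRingHom (s : Finset σ) : MvPowerSeries σ ℂ →+* MvPowerSeries σ ℂ where
  toFun := projL s
  map_one' := by
    ext N
    rw [coeff_projL, coeff_one]
    split_ifs <;> simp_all
  map_mul' f g := by
    ext N
    simp only [coeff_projL, coeff_mul]
    split_ifs with hN
    · refine sum_congr rfl fun x hx => ?_
      rw [HasAntidiagonal.mem_antidiagonal] at hx
      rw [if_pos ((Finsupp.support_mono (hx ▸ le_self_add)).trans hN),
        if_pos ((Finsupp.support_mono (hx ▸ le_add_self)).trans hN)]
    · refine (sum_eq_zero fun x hx => ?_).symm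
      rw [HasAntidiagonal.mem_antidiagonal] at hx
      rw [← hx, Finsupp.support_add_eq_union, union_subset_iff] at hN
      by_cases h₁ : x.1.support ⊆ s
      · rw [if_neg (hN ∘ And.intro h₁), mul_zero]
      · rw [if_neg h₁, zero_mul]
  map_zero' := by
    ext N
    simp [coeff_projL]
  map_add' f g := by
    ext N
    simp only [coeff_projL, map_add]
    split_ifs <;> simp

lemma coeff_projLRingHom_of_subset {s : Finset σ} {N : σ →₀ ℕ} (hN : N.support ⊆ s)
    (f : MvPowerSeries σ ℂ) : coeff N (projLRingHom s f) = coeff N f :=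
  if_pos hN

lemma projLRingHom_X_of_notMem {s : Finset σ} {j : σ} (hj : j ∉ s) :
    projLRingHom s (X j) = 0 := by
  ext N
  change coeff N (projL s (X j)) = 0
  rw [coeff_projL, coeff_X]
  split_ifs with hN h <;> simp_all

lemma projLRingHom_cpow_of_eq_one {s : Finset σ} {f : MvPowerSeries σ ℂ}
    (hf : projLRingHom s f = 1) (a : ℂ) : projLRingHom s (cpow f a) = 1 := by
  ext N
  change coeff N (projL s (cpow f a)) = _
  rw [coeff_projL]
  split_ifs with hN
  · have hpow : ∀ k, coeff N ((f - 1) ^ k) = coeff N (((1 : MvPowerSeries σ ℂ) - 1) ^ k) :=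
      fun k => by
        rw [← coeff_projLRingHom_of_subset hN, map_pow, map_sub, hf, map_one,
          ← coeff_projLRingHom_of_subset hN, map_pow, map_sub, map_one]
    rw [coeff_cpow]
    simp only [hpow]
    rw [← coeff_cpow, one_cpow]
  · rw [coeff_one, if_neg]
    rintro rfl
    simp at hN

lemma projLRingHom_cpow_one_sub_X {s : Finset σ} {j : σ} (hj : j ∉ s) (a : ℂ) :
    projLRingHom s (cpow (1 - X j) a) = 1 :=
  projLRingHom_cpow_of_eq_one (by rw [map_sub, map_one, projLRingHom_X_of_notMem hj, sub_zero]) a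

/-- The hypothesis says that `f j - 1` only has monomials containing `w_j`, so the coefficient at
`N` of a partial product only depends on the factors with `j ∈ N.support`. -/
lemma hasProdPS_of_projLRingHom_eq_one {f : σ → MvPowerSeries σ ℂ}
    (hf : ∀ s j, j ∉ s → projLRingHom s (f j) = 1) :
    HasProdPS f fun N => coeff N (∏ j ∈ N.support, f j) := fun N =>
  ⟨N.support, fun t ht => calc
    coeff N (∏ j ∈ t, f j) = coeff N (projLRingHom N.support (∏ j ∈ t, f j)) :=
      (coeff_projLRingHom_of_subset subset_rfl _).symm
    _ = coeff N (projLRingHom N.support (∏ j ∈ N.support, f j)) := by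
      rw [map_prod (projLRingHom _), map_prod (projLRingHom _),
        prod_subset ht fun j _ hj => hf _ j hj]
    _ = coeff N (∏ j ∈ N.support, f j) := coeff_projLRingHom_of_subset subset_rfl _⟩

lemma exists_hasProdPS_cpow_one_sub_X (a : σ → ℂ) :
    ∃ P, HasProdPS (fun j => cpow (1 - X j) (a j)) P :=
  ⟨_, hasProdPS_of_projLRingHom_eq_one fun _ _ hj => projLRingHom_cpow_one_sub_X hj _⟩

end Projection

section QSystem

variable {H : Type*} {D Dinv : H → H → ℂ} {Q : H → MvPowerSeries H ℂ}

lemma infSys_zero_iff :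
    InfSys D (fun _ _ => 0) Q ↔ (∀ i, constantCoeff (Q i) = 1) ∧
      ∀ j, HasProdPS (fun k => cpow (Q k) (D j k)) (1 - X j) := by
  have hzero : HasProdPS (fun k => cpow (Q k) 0) 1 := by
    simpa only [cpow_zero] using hasProdPS_one
  refine and_congr_right fun _ => forall_congr' fun j =>
    ⟨fun ⟨P₁, P₂, h₁, h₂, hsum⟩ => ?_, fun h => ⟨_, 1, h, hzero, by ring⟩⟩
  rw [h₂.unique hzero, mul_one, ← eq_sub_iff_add_eq] at hsum
  exact hsum ▸ h₁

lemma hasProdPS_cpow_const_mul (hQ : ∀ k, constantCoeff (Q k) = 1) {d : H → ℂ}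
    {P : MvPowerSeries H ℂ} (h : HasProdPS (fun k => cpow (Q k) (d k)) P) (c : ℂ) :
    HasProdPS (fun k => cpow (Q k) (c * d k)) (cpow P c) := by
  simpa only [← cpow_mul (hQ _), mul_comm (d _)] using
    h.cpow (fun k => constantCoeff_cpow _ _) c

/-- For a solution, the inner products of the canonical property are `(1 - w_j)^{(D⁻¹)_{ij}}`. -/
lemma isCanonicalPS_iff (hQ : ∀ k, constantCoeff (Q k) = 1)
    (hsys : ∀ j, HasProdPS (fun k => cpow (Q k) (D j k)) (1 - X j)) :
    IsCanonicalPS Dinv D Q ↔ ∀ i, HasProdPS (fun j => cpow (1 - X j) (Dinv i j)) (Q i) := by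
  have hinner : ∀ i j, HasProdPS (fun k => cpow (Q k) (Dinv i j * D j k))
      (cpow (1 - X j) (Dinv i j)) := fun i j => hasProdPS_cpow_const_mul hQ (hsys j) _
  refine forall_congr' fun i => ⟨fun ⟨inner, h_inner, h_outer⟩ => ?_, fun h => ⟨_, hinner i, h⟩⟩
  rwa [show inner = _ from funext fun j => (h_inner j).unique (hinner i j)] at h_outer

lemma prod_cpow_cpow_one_sub_X_of_mul_eq_one [DecidableEq H] {j : H} {T : Finset H}
    (hT : Function.support (D j) ⊆ T)
    (hDDinv : ∀ l, ∑ᶠ k, D j k * Dinv k l = if j = l then 1 else 0) (l : H) :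
    ∏ k ∈ T, cpow (cpow (1 - X l) (Dinv k l)) (D j k) =
      (Pi.mulSingle j (1 - X j) : H → MvPowerSeries H ℂ) l := by
  have hX : constantCoeff (1 - X l : MvPowerSeries H ℂ) = 1 := by simp
  have hexp : ∑ k ∈ T, Dinv k l * D j k = if j = l then 1 else 0 := by
    rw [← hDDinv l, finsum_eq_sum_of_support_subset _
      ((Function.support_mul_subset_left _ _).trans hT)]
    simp only [mul_comm]
  simp_rw [← cpow_mul hX]
  rw [← cpow_sum hX, hexp]
  split_ifs with hjl
  · rw [hjl, cpow_one hX, Pi.mulSingle_eq_same]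
  · rw [cpow_zero, Pi.mulSingle_eq_of_ne (Ne.symm hjl)]

lemma hasProdPS_cpow_one_sub_X_of_mul_eq_one [DecidableEq H]
    (hD : ∀ j, (Function.support (D j)).Finite)
    (hDDinv : ∀ j l, ∑ᶠ k, D j k * Dinv k l = if j = l then 1 else 0)
    (hQ : ∀ i, HasProdPS (fun j => cpow (1 - X j) (Dinv i j)) (Q i)) (j : H) :
    HasProdPS (fun k => cpow (Q k) (D j k)) (1 - X j) := by
  have hT : Function.support (D j) ⊆ (hD j).toFinset := by simp
  have hlim := HasProdPS.finset_prod (hD j).toFinset fun k _ =>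
    (hQ k).cpow (fun _ => constantCoeff_cpow _ _) (D j k)
  simp only [prod_cpow_cpow_one_sub_X_of_mul_eq_one hT (hDDinv j)] at hlim
  rw [(hasProdPS_mulSingle j (1 - X j)).unique hlim]
  exact hasProdPS_of_forall_notMem fun k hk => by
    rw [Function.notMem_support.1 (hk ∘ (hT ·)), cpow_zero]

theorem infSys_zero_and_isCanonicalPS_iff [DecidableEq H]
    (hD : ∀ j, (Function.support (D j)).Finite)
    (hDDinv : ∀ j l, ∑ᶠ k, D j k * Dinv k l = if j = l then 1 else 0) :
    InfSys D (fun _ _ => 0) Q ∧ IsCanonicalPS Dinv D Q ↔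
      ∀ i, HasProdPS (fun j => cpow (1 - X j) (Dinv i j)) (Q i) := by
  refine ⟨fun ⟨hsys, hcan⟩ => ?_, fun h => ?_⟩
  · obtain ⟨hQ, hsys⟩ := infSys_zero_iff.1 hsys
    exact (isCanonicalPS_iff hQ hsys).1 hcan
  · have hQ : ∀ i, constantCoeff (Q i) = 1 := fun i =>
      (h i).constantCoeff_eq_one fun _ => constantCoeff_cpow _ _
    have hsys := hasProdPS_cpow_one_sub_X_of_mul_eq_one hD hDDinv h
    exact ⟨infSys_zero_iff.2 ⟨hQ, hsys⟩, (isCanonicalPS_iff hQ hsys).2 h⟩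

end QSystem

section Tridiagonal

lemma Dtri_apply (j k : ℕ+) :
    Dtri j k = if (j : ℕ) = k then -2 else if (j : ℕ) = k + 1 ∨ (k : ℕ) = j + 1 then 1 else 0 := by
  simp only [Dtri, ← PNat.coe_inj, PNat.add_coe, PNat.one_coe]

lemma DtriInv_apply (k l : ℕ+) : DtriInv k l = -(min (k : ℕ) l : ℕ) :=
  rfl

lemma support_Dtri_one : Function.support (Dtri 1) ⊆ ({1, 2} : Finset ℕ+) := fun k hk => by
  rw [Function.mem_support, Dtri_apply] at hk
  simp only [coe_insert, coe_singleton, Set.mem_insert_iff, Set.mem_singleton_iff,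
    ← PNat.coe_inj]
  split_ifs at hk <;> simp_all

lemma support_Dtri_add_one (p : ℕ+) :
    Function.support (Dtri (p + 1)) ⊆ ({p, p + 1, p + 2} : Finset ℕ+) := fun k hk => by
  rw [Function.mem_support, Dtri_apply, PNat.add_coe, PNat.one_coe] at hk
  simp only [coe_insert, coe_singleton, Set.mem_insert_iff, Set.mem_singleton_iff,
    ← PNat.coe_inj, PNat.add_coe, PNat.val_ofNat]
  split_ifs at hk <;> first | omega | exact absurd rfl hk

lemma Dtri_support_finite (j : ℕ+) : (Function.support (Dtri j)).Finite := by
  rcases eq_or_ne j 1 with rfl | hj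
  · exact (finite_toSet _).subset support_Dtri_one
  · obtain ⟨p, rfl⟩ := PNat.exists_eq_succ_of_ne_one hj
    exact (finite_toSet _).subset (support_Dtri_add_one p)

lemma Dtri_mul_DtriInv (j l : ℕ+) :
    ∑ᶠ k, Dtri j k * DtriInv k l = if j = l then 1 else 0 := by
  have hl := l.pos
  rcases eq_or_ne j 1 with rfl | hj
  · have key : 2 * min 1 (l : ℕ) = min 2 (l : ℕ) + if 1 = l then 1 else 0 := by
      simp only [← PNat.coe_inj, PNat.one_coe]
      split_ifs <;> omega
    rw [finsum_eq_sum_of_support_subset _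
      ((Function.support_mul_subset_left _ _).trans support_Dtri_one), sum_pair (by decide)]
    simp only [Dtri_apply, DtriInv_apply]
    norm_num
    have keyC := congrArg (Nat.cast : ℕ → ℂ) key
    push_cast at keyC
    linear_combination keyC
  · obtain ⟨p, rfl⟩ := PNat.exists_eq_succ_of_ne_one hj
    have key : 2 * min ((p : ℕ) + 1) l = min (p : ℕ) l + min ((p : ℕ) + 2) l +
        if p + 1 = l then 1 else 0 := by
      simp only [← PNat.coe_inj, PNat.add_coe, PNat.one_coe]
      split_ifs <;> omega
    rw [finsum_eq_sum_of_support_subset _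
      ((Function.support_mul_subset_left _ _).trans (support_Dtri_add_one p)),
      sum_insert (by simp [← PNat.coe_inj]), sum_pair (by simp)]
    simp only [Dtri_apply, DtriInv_apply, PNat.add_coe]
    norm_num
    have keyC := congrArg (Nat.cast : ℕ → ℂ) key
    push_cast at keyC
    linear_combination keyC

end Tridiagonal

/-- On `H = {1,2,3,…}` with `D_{ij} = -2δ_{ij}+δ_{i,j-1}+δ_{i,j+1}`,
`(D⁻¹)_{ij} = -min(i,j)` and `G = O`, the infinite products
`∏_{j=1}^∞ (1-w_j)^{-min(i,j)}` converge, and the family they define is the unique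
canonical solution of the infinite `Q`-system `∏_j Q_j^{D_{ij}} + w_i = 1`, i.e.
`Q_{i-1} Q_{i+1} / Q_i² + w_i = 1` with `Q_0 = 1`. -/
theorem statement12 :
    (∃ Q : ℕ+ → MvPowerSeries ℕ+ ℂ,
      ∀ i, HasProdPS
        (fun j : ℕ+ => cpow (1 - MvPowerSeries.X j) (-(((min i j : ℕ+) : ℕ) : ℂ))) (Q i)) ∧
    (∀ Q : ℕ+ → MvPowerSeries ℕ+ ℂ,
      (∀ i, HasProdPS
        (fun j : ℕ+ => cpow (1 - MvPowerSeries.X j) (-(((min i j : ℕ+) : ℕ) : ℂ))) (Q i)) →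
      ((InfSys Dtri (fun _ _ => 0) Q ∧ IsCanonicalPS DtriInv Dtri Q) ∧
       ∀ Q₂ : ℕ+ → MvPowerSeries ℕ+ ℂ,
         InfSys Dtri (fun _ _ => 0) Q₂ → IsCanonicalPS DtriInv Dtri Q₂ → Q₂ = Q)) := by
  have hcanonical (Q : ℕ+ → MvPowerSeries ℕ+ ℂ) :=
    infSys_zero_and_isCanonicalPS_iff (Q := Q) Dtri_support_finite Dtri_mul_DtriInv
  refine ⟨?_, fun Q hQ => ⟨(hcanonical Q).2 hQ, fun Q₂ h₁ h₂ =>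
    funext fun i => ((hcanonical Q₂).1 ⟨h₁, h₂⟩ i).unique (hQ i)⟩⟩
  choose Q hQ using fun i => exists_hasProdPS_cpow_one_sub_X (DtriInv i)
  exact ⟨Q, hQ⟩
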